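/- arXiv:1307.6496 — 2 statements merged into one kernel-verified Lean document; each statement's English description precedes it below -/
import Mathlib

section
/- Let f : A → B be a ring epimorphism between finite dimensional K-algebras and let C denote the class of finitely generated A-modules X whose minimal projective presentation becomes an isomorphism after applying B ⊗_A −. Then C is closed under finite direct sums, direct summands, and extensions. -/
noncomputable section
open Function

/-- Ring epimorphism: epimorphism in the category of unital rings. -/
def IsRingEpi {A B : Type} [Ring A] [Ring B] (f : A →+* B) : Prop :=
  ∀ (C : Type) [Ring C], ∀ g h : B →+* C, g.comp f = h.comp f → g = h

/-- Relations defining the tensor product of a right `A`-module and a left `A`-module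
over the (possibly noncommutative) ring `A`. -/
def ncRel (A : Type) [Ring A] (M : Type) [AddCommGroup M] [Module Aᵐᵒᵖ M]
    (N : Type) [AddCommGroup N] [Module A N] : Submodule ℤ (TensorProduct ℤ M N) :=
  Submodule.span ℤ {x | ∃ (a : A) (m : M) (n : N),
    x = (MulOpposite.op a • m) ⊗ₜ[ℤ] n - m ⊗ₜ[ℤ] (a • n)}

/-- The tensor product `M ⊗_A N` of a right `A`-module `M` and a left `A`-module `N`. -/
abbrev NCTensor (A : Type) [Ring A] (M : Type) [AddCommGroup M] [Module Aᵐᵒᵖ M]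
    (N : Type) [AddCommGroup N] [Module A N] : Type :=
  TensorProduct ℤ M N ⧸ ncRel A M N

/-- Functoriality of `⊗_A N` in the right-module variable. -/
def ncMapM {A : Type} [Ring A] {M M' : Type} [AddCommGroup M] [Module Aᵐᵒᵖ M]
    [AddCommGroup M'] [Module Aᵐᵒᵖ M'] (N : Type) [AddCommGroup N] [Module A N]
    (g : M →ₗ[Aᵐᵒᵖ] M') : NCTensor A M N →ₗ[ℤ] NCTensor A M' N :=
  Submodule.mapQ _ _ (TensorProduct.map g.toAddMonoidHom.toIntLinearMap LinearMap.id)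
    (by
      rw [ncRel, Submodule.span_le]
      rintro x ⟨a, m, n, rfl⟩
      refine Submodule.mem_comap.2 ?_
      have h1 : (TensorProduct.map g.toAddMonoidHom.toIntLinearMap LinearMap.id)
          ((MulOpposite.op a • m) ⊗ₜ[ℤ] n - m ⊗ₜ[ℤ] (a • n))
          = (MulOpposite.op a • g m) ⊗ₜ[ℤ] n - (g m) ⊗ₜ[ℤ] (a • n) := by
        simp [map_sub, TensorProduct.map_tmul, map_smul]
      erw [h1]
      exact Submodule.subset_span ⟨a, g m, n, rfl⟩)

/-- Functoriality of `M ⊗_A -` in the left-module variable. -/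
def ncMapN {A : Type} [Ring A] (M : Type) [AddCommGroup M] [Module Aᵐᵒᵖ M]
    {N N' : Type} [AddCommGroup N] [Module A N] [AddCommGroup N'] [Module A N']
    (g : N →ₗ[A] N') : NCTensor A M N →ₗ[ℤ] NCTensor A M N' :=
  Submodule.mapQ _ _ (TensorProduct.map LinearMap.id g.toAddMonoidHom.toIntLinearMap)
    (by
      rw [ncRel, Submodule.span_le]
      rintro x ⟨a, m, n, rfl⟩
      refine Submodule.mem_comap.2 ?_
      have h1 : (TensorProduct.map LinearMap.id g.toAddMonoidHom.toIntLinearMap)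
          ((MulOpposite.op a • m) ⊗ₜ[ℤ] n - m ⊗ₜ[ℤ] (a • n))
          = (MulOpposite.op a • m) ⊗ₜ[ℤ] (g n) - m ⊗ₜ[ℤ] (g (a • n)) := by
        simp [map_sub, TensorProduct.map_tmul]
      erw [h1]
      rw [map_smul]
      exact Submodule.subset_span ⟨a, m, g n, rfl⟩)

/-- The left `A`-module structure on `B` induced by a ring homomorphism `A → B`. -/
def leftMod {A B : Type} [Ring A] [Ring B] (f : A →+* B) : Module A B :=
  Module.compHom B f

/-- The right `A`-module structure on `B` induced by a ring homomorphism `A → B`. -/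
def rightMod {A B : Type} [Ring A] [Ring B] (f : A →+* B) : Module Aᵐᵒᵖ B :=
  Module.compHom B (RingHom.op f)

/-- `B ⊗_A N` for a ring homomorphism `f : A → B` and a left `A`-module `N`. -/
abbrev TensorWithHom {A B : Type} [Ring A] [Ring B] (f : A →+* B)
    (N : Type) [AddCommGroup N] [Module A N] : Type :=
  @NCTensor A _ B _ (rightMod f) N _ _

/-- The map `B ⊗_A σ` for a ring homomorphism `f : A → B` and an `A`-linear map `σ`. -/
def tensorMapOfHom {A B : Type} [Ring A] [Ring B] (f : A →+* B)
    {P Q : Type} [AddCommGroup P] [Module A P] [AddCommGroup Q] [Module A Q]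
    (σ : P →ₗ[A] Q) : TensorWithHom f P →ₗ[ℤ] TensorWithHom f Q :=
  @ncMapN A _ B _ (rightMod f) P Q _ _ _ _ σ

/-- A projective cover: a surjection from a projective module whose kernel is
superfluous. -/
def IsProjCover (A : Type) [Ring A] {P X : Type} [AddCommGroup P] [Module A P]
    [AddCommGroup X] [Module A X] (p : P →ₗ[A] X) : Prop :=
  Module.Projective A P ∧ Surjective p ∧
    ∀ L : Submodule A P, L ⊔ LinearMap.ker p = ⊤ → L = ⊤

/-- The minimal projective presentation of `X` becomes an isomorphism after applying
`B ⊗_A -` (quantified over all minimal projective presentations of `X`). -/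
def MinPresInverted {A B : Type} [Ring A] [Ring B] (f : A →+* B)
    (X : ModuleCat.{0} A) : Prop :=
  ∀ (P₀ P₁ : ModuleCat.{0} A) (σ : ↑P₁ →ₗ[A] ↑P₀) (π : ↑P₀ →ₗ[A] ↑X)
    (hexact : LinearMap.range σ = LinearMap.ker π),
    IsProjCover A π →
    IsProjCover A (σ.codRestrict (LinearMap.ker π)
      (fun x => hexact ▸ LinearMap.mem_range_self σ x)) →
    Function.Bijective (tensorMapOfHom f σ)

/-!
Projective covers exist over a finite-dimensional algebra: among the projective submodules
of `Aⁿ` mapping onto `X` take a minimal one `P`; if `u` is an endomorphism of `P` over `X`,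
Fitting's lemma splits off `range uᵏ`, which is again projective and maps onto `X`, so `u` is
onto. Hence every finitely generated module has a minimal projective presentation.

If `X` is a retract of `Y`, a minimal presentation `σ` of `X` is a retract, in the category of
arrows, of any projective presentation `τ` of `Y`: lift the retraction data along the
presentations, and use that an endomorphism of a projective cover over its target is an
automorphism. As `B ⊗_A -` is a functor, `B ⊗_A σ` is then a retract of `B ⊗_A τ`, hence
invertible if `B ⊗_A τ` is. So it suffices to invert some projective presentation of a module
containing `X` as a summand. For `X ⊕ Y` and for a summand of `X ⊕ Y` take the sum of the
minimal presentations; for an extension the Horseshoe Lemma gives a presentation that is block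
upper triangular with the presentations of the outer terms on the diagonal, and `B ⊗_A -`
preserves this shape.
-/

open LinearMap

theorem LinearMap.bijective_of_blockTriangular {R M₁ M₂ N₁ N₂ : Type*} [Ring R]
    [AddCommGroup M₁] [Module R M₁] [AddCommGroup M₂] [Module R M₂]
    [AddCommGroup N₁] [Module R N₁] [AddCommGroup N₂] [Module R N₂]
    (φ : M₁ × M₂ →ₗ[R] N₁ × N₂) (h₂₁ : snd R N₁ N₂ ∘ₗ φ ∘ₗ inl R M₁ M₂ = 0)
    (h₁₁ : Function.Bijective (fst R N₁ N₂ ∘ₗ φ ∘ₗ inl R M₁ M₂))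
    (h₂₂ : Function.Bijective (snd R N₁ N₂ ∘ₗ φ ∘ₗ inr R M₁ M₂)) :
    Function.Bijective φ := by
  have hφ : ∀ x y, φ (x, y) = φ (x, 0) + φ (0, y) := fun x y => by
    rw [← map_add, Prod.mk_add_mk, add_zero, zero_add]
  have e₂₁ : ∀ x, (φ (x, 0)).2 = 0 := LinearMap.congr_fun h₂₁
  have e₁₁ : ∀ x, (fst R N₁ N₂ ∘ₗ φ ∘ₗ inl R M₁ M₂) x = (φ (x, 0)).1 := fun _ => rfl
  have e₂₂ : ∀ y, (snd R N₁ N₂ ∘ₗ φ ∘ₗ inr R M₁ M₂) y = (φ (0, y)).2 := fun _ => rfl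
  refine ⟨(injective_iff_map_eq_zero φ).2 fun ⟨x, y⟩ h => ?_, fun ⟨u, v⟩ => ?_⟩
  · rw [hφ, Prod.ext_iff] at h
    simp only [Prod.fst_add, Prod.snd_add, Prod.fst_zero, Prod.snd_zero, e₂₁, zero_add] at h
    obtain rfl : y = 0 := h₂₂.injective (by rw [map_zero, e₂₂, h.2])
    obtain rfl : x = 0 := h₁₁.injective (by rw [map_zero, e₁₁]; simpa [Prod.mk_zero_zero] using h.1)
    rfl
  · obtain ⟨y, hy⟩ := h₂₂.surjective v
    obtain ⟨x, hx⟩ := h₁₁.surjective (u - (φ (0, y)).1)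
    rw [e₂₂] at hy
    rw [e₁₁] at hx
    refine ⟨(x, y), ?_⟩
    rw [hφ, Prod.ext_iff]
    simp [hx, hy, e₂₁]

theorem Function.bijective_of_retract {α β γ δ : Type*} {s : α → β} {t : γ → δ}
    {i₀ : β → δ} {r₀ : δ → β} {i₁ : α → γ} {r₁ : γ → α}
    (hi : ∀ a, t (i₁ a) = i₀ (s a)) (hr : ∀ c, s (r₁ c) = r₀ (t c))
    (h₀ : Function.LeftInverse r₀ i₀) (h₁ : Function.LeftInverse r₁ i₁)
    (ht : Function.Bijective t) : Function.Bijective s := by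
  refine ⟨fun a a' h => h₁.injective (ht.injective (by rw [hi, hi, h])), fun b => ?_⟩
  obtain ⟨c, hc⟩ := ht.surjective (i₀ b)
  exact ⟨r₁ c, by rw [hr, hc, h₀]⟩

section TensorFunctoriality

variable {A B : Type} [Ring A] [Ring B] (f : A →+* B)
  {P Q R : Type} [AddCommGroup P] [Module A P] [AddCommGroup Q] [Module A Q]
  [AddCommGroup R] [Module A R]

theorem tensorWithHom_ext {M : Type} [AddCommGroup M] {φ ψ : TensorWithHom f P →ₗ[ℤ] M}
    (h : ∀ (b : B) (p : P), φ (Submodule.Quotient.mk (b ⊗ₜ[ℤ] p)) =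
      ψ (Submodule.Quotient.mk (b ⊗ₜ[ℤ] p))) :
    φ = ψ :=
  Submodule.linearMap_qext _ (TensorProduct.ext' h)

theorem tensorMapOfHom_mk (σ : P →ₗ[A] Q) (b : B) (p : P) :
    tensorMapOfHom f σ (Submodule.Quotient.mk (b ⊗ₜ[ℤ] p)) =
      Submodule.Quotient.mk (b ⊗ₜ[ℤ] σ p) :=
  rfl

theorem tensorMapOfHom_id : tensorMapOfHom f (LinearMap.id : P →ₗ[A] P) = LinearMap.id :=
  tensorWithHom_ext f fun _ _ => rfl

theorem tensorMapOfHom_comp (τ : Q →ₗ[A] R) (σ : P →ₗ[A] Q) :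
    tensorMapOfHom f (τ ∘ₗ σ) = tensorMapOfHom f τ ∘ₗ tensorMapOfHom f σ :=
  tensorWithHom_ext f fun _ _ => rfl

theorem tensorMapOfHom_comp_apply (τ : Q →ₗ[A] R) (σ : P →ₗ[A] Q) (x : TensorWithHom f P) :
    tensorMapOfHom f (τ ∘ₗ σ) x = tensorMapOfHom f τ (tensorMapOfHom f σ x) := by
  rw [tensorMapOfHom_comp]
  rfl

theorem tensorMapOfHom_add (σ τ : P →ₗ[A] Q) :
    tensorMapOfHom f (σ + τ) = tensorMapOfHom f σ + tensorMapOfHom f τ :=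
  tensorWithHom_ext f fun b p => by
    rw [LinearMap.add_apply, tensorMapOfHom_mk, tensorMapOfHom_mk, tensorMapOfHom_mk,
      LinearMap.add_apply, TensorProduct.tmul_add, Submodule.Quotient.mk_add]

theorem tensorMapOfHom_zero : tensorMapOfHom f (0 : P →ₗ[A] Q) = 0 := by
  simpa using tensorMapOfHom_add f (0 : P →ₗ[A] Q) 0

end TensorFunctoriality

section TensorProd

variable {A B : Type} [Ring A] [Ring B] (f : A →+* B)

def tensorProdEquiv (P Q : Type) [AddCommGroup P] [Module A P] [AddCommGroup Q] [Module A Q] :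
    TensorWithHom f (P × Q) ≃ₗ[ℤ] TensorWithHom f P × TensorWithHom f Q :=
  LinearEquiv.ofLinearMap
    ((tensorMapOfHom f (fst A P Q)).prod (tensorMapOfHom f (snd A P Q)))
    ((tensorMapOfHom f (inl A P Q)).coprod (tensorMapOfHom f (inr A P Q)))
    (LinearMap.ext fun ⟨x, y⟩ => by
      simp [← tensorMapOfHom_comp_apply, tensorMapOfHom_id, tensorMapOfHom_zero])
    (by
      rw [coprod_comp_prod, ← tensorMapOfHom_comp, ← tensorMapOfHom_comp, ← tensorMapOfHom_add,
        ← coprod_comp_prod, coprod_inl_inr, LinearMap.id_comp, pair_fst_snd, tensorMapOfHom_id])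

variable {P₁ P₂ Q₁ Q₂ : Type} [AddCommGroup P₁] [Module A P₁] [AddCommGroup P₂] [Module A P₂]
  [AddCommGroup Q₁] [Module A Q₁] [AddCommGroup Q₂] [Module A Q₂]

theorem bijective_tensorMapOfHom_of_blockTriangular (ρ : P₁ × P₂ →ₗ[A] Q₁ × Q₂)
    {σ : P₁ →ₗ[A] Q₁} {τ : P₂ →ₗ[A] Q₂} (h₁₁ : fst A Q₁ Q₂ ∘ₗ ρ ∘ₗ inl A P₁ P₂ = σ)
    (h₂₁ : snd A Q₁ Q₂ ∘ₗ ρ ∘ₗ inl A P₁ P₂ = 0) (h₂₂ : snd A Q₁ Q₂ ∘ₗ ρ ∘ₗ inr A P₁ P₂ = τ)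
    (hσ : Function.Bijective (tensorMapOfHom f σ))
    (hτ : Function.Bijective (tensorMapOfHom f τ)) :
    Function.Bijective (tensorMapOfHom f ρ) := by
  set eP := tensorProdEquiv f P₁ P₂
  set eQ := tensorProdEquiv f Q₁ Q₂
  set φ := eQ.toLinearMap ∘ₗ tensorMapOfHom f ρ ∘ₗ eP.symm.toLinearMap
  have hblock : ∀ {M N : Type} [AddCommGroup M] [Module A M] [AddCommGroup N] [Module A N]
      {g : Q₁ × Q₂ →ₗ[A] N} {h : M →ₗ[A] P₁ × P₂} {g' h'},
      g' ∘ₗ eQ.toLinearMap = tensorMapOfHom f g → eP.symm.toLinearMap ∘ₗ h' = tensorMapOfHom f h →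
        g' ∘ₗ φ ∘ₗ h' = tensorMapOfHom f (g ∘ₗ ρ ∘ₗ h) := by
    intro _ _ _ _ _ _ _ _ _ _ hg hh
    rw [tensorMapOfHom_comp, tensorMapOfHom_comp, ← hg, ← hh]
    rfl
  have hinl : eP.symm.toLinearMap ∘ₗ inl ℤ _ _ = tensorMapOfHom f (inl A P₁ P₂) :=
    coprod_inl _ _
  have hinr : eP.symm.toLinearMap ∘ₗ inr ℤ _ _ = tensorMapOfHom f (inr A P₁ P₂) :=
    coprod_inr _ _
  have hfst : fst ℤ _ _ ∘ₗ eQ.toLinearMap = tensorMapOfHom f (fst A Q₁ Q₂) := rfl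
  have hsnd : snd ℤ _ _ ∘ₗ eQ.toLinearMap = tensorMapOfHom f (snd A Q₁ Q₂) := rfl
  have hφ : Function.Bijective φ := by
    refine LinearMap.bijective_of_blockTriangular φ ?_ ?_ ?_
    · rw [hblock hsnd hinl, h₂₁, tensorMapOfHom_zero]
    · rwa [hblock hfst hinl, h₁₁]
    · rwa [hblock hsnd hinr, h₂₂]
  have hρ : ⇑(tensorMapOfHom f ρ) = eQ.symm ∘ φ ∘ eP := funext fun x => by simp [φ]
  rw [hρ]
  exact eQ.symm.bijective.comp (hφ.comp eP.bijective)

end TensorProd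

theorem bijective_tensorMapOfHom_of_retract {A B : Type} [Ring A] [Ring B] (f : A →+* B)
    {P₀ P₁ Q₀ Q₁ : Type} [AddCommGroup P₀] [Module A P₀] [AddCommGroup P₁] [Module A P₁]
    [AddCommGroup Q₀] [Module A Q₀] [AddCommGroup Q₁] [Module A Q₁]
    {σ : P₁ →ₗ[A] P₀} {τ : Q₁ →ₗ[A] Q₀} {i₀ : P₀ →ₗ[A] Q₀} {r₀ : Q₀ →ₗ[A] P₀}
    {i₁ : P₁ →ₗ[A] Q₁} {r₁ : Q₁ →ₗ[A] P₁} (hi : τ ∘ₗ i₁ = i₀ ∘ₗ σ) (hr : σ ∘ₗ r₁ = r₀ ∘ₗ τ)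
    (h₀ : r₀ ∘ₗ i₀ = LinearMap.id) (h₁ : r₁ ∘ₗ i₁ = LinearMap.id)
    (hτ : Function.Bijective (tensorMapOfHom f τ)) :
    Function.Bijective (tensorMapOfHom f σ) :=
  Function.bijective_of_retract (i₀ := tensorMapOfHom f i₀) (r₀ := tensorMapOfHom f r₀)
    (i₁ := tensorMapOfHom f i₁) (r₁ := tensorMapOfHom f r₁)
    (fun x => by simp only [← tensorMapOfHom_comp_apply, hi])
    (fun x => by simp only [← tensorMapOfHom_comp_apply, hr])
    (fun x => by rw [← tensorMapOfHom_comp_apply, h₀, tensorMapOfHom_id, id_apply])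
    (fun x => by rw [← tensorMapOfHom_comp_apply, h₁, tensorMapOfHom_id, id_apply]) hτ

section ProjCover

variable {A : Type} [Ring A] {P X : Type} [AddCommGroup P] [Module A P]
  [AddCommGroup X] [Module A X] {p : P →ₗ[A] X}

theorem isProjCover_of_forall_surjective [Module.Projective A P] (hp : Function.Surjective p)
    (h : ∀ u : P →ₗ[A] P, p ∘ₗ u = p → Function.Surjective u) : IsProjCover A p := by
  refine ⟨inferInstance, hp, fun L hL => ?_⟩
  have hpL : Function.Surjective (p ∘ₗ L.subtype) := by
    rw [← range_eq_top, range_comp, Submodule.range_subtype]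
    exact (LinearMap.map_eq_top_iff (range_eq_top.2 hp)).2 hL
  obtain ⟨s, hs⟩ := Module.projective_lifting_property _ p hpL
  have hu := h (L.subtype ∘ₗ s) (by rw [← LinearMap.comp_assoc, hs])
  exact eq_top_iff.2 fun x _ => by
    obtain ⟨y, rfl⟩ := hu x
    exact (s y).2

theorem IsProjCover.surjective_of_comp_eq (hp : IsProjCover A p) {u : P →ₗ[A] P}
    (h : p ∘ₗ u = p) : Function.Surjective u := by
  refine range_eq_top.1 (hp.2.2 _ (eq_top_iff.2 fun x _ => Submodule.mem_sup.2
    ⟨u x, mem_range_self u x, x - u x, ?_, add_sub_cancel _ _⟩))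
  rw [mem_ker, map_sub, ← LinearMap.comp_apply, h, sub_self]

theorem IsProjCover.bijective_of_comp_eq (hp : IsProjCover A p) {u : P →ₗ[A] P}
    (h : p ∘ₗ u = p) : Function.Bijective u := by
  have := hp.1
  have hu := hp.surjective_of_comp_eq h
  obtain ⟨s, hs⟩ := Module.projective_lifting_property u LinearMap.id hu
  have hps : p ∘ₗ s = p := by rw [← h, LinearMap.comp_assoc, hs, LinearMap.comp_id, h]
  have hus : Function.LeftInverse u s := LinearMap.congr_fun hs
  exact ⟨(hus.rightInverse_of_surjective (hp.surjective_of_comp_eq hps)).injective, hu⟩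

theorem IsProjCover.exists_retract (hp : IsProjCover A p) {Q Y : Type} [AddCommGroup Q]
    [Module A Q] [Module.Projective A Q] [AddCommGroup Y] [Module A Y] {ρ : Q →ₗ[A] Y}
    (hρ : Function.Surjective ρ) (i : X →ₗ[A] Y) (r : Y →ₗ[A] X) (hri : r ∘ₗ i = LinearMap.id) :
    ∃ (i₀ : P →ₗ[A] Q) (r₀ : Q →ₗ[A] P),
      ρ ∘ₗ i₀ = i ∘ₗ p ∧ p ∘ₗ r₀ = r ∘ₗ ρ ∧ r₀ ∘ₗ i₀ = LinearMap.id := by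
  have := hp.1
  obtain ⟨i₀, hi₀⟩ := Module.projective_lifting_property ρ (i ∘ₗ p) hρ
  obtain ⟨h₀, hh₀⟩ := Module.projective_lifting_property p (r ∘ₗ ρ) hp.2.1
  have hpe : p ∘ₗ h₀ ∘ₗ i₀ = p := by
    rw [← LinearMap.comp_assoc, hh₀, LinearMap.comp_assoc, hi₀, ← LinearMap.comp_assoc, hri,
      LinearMap.id_comp]
  set e := LinearEquiv.ofBijective _ (hp.bijective_of_comp_eq hpe)
  have hpe' : p ∘ₗ e.symm.toLinearMap = p := LinearMap.ext fun x => by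
    conv_rhs => rw [← e.apply_symm_apply x]
    exact (LinearMap.congr_fun hpe (e.symm x)).symm
  refine ⟨i₀, e.symm.toLinearMap ∘ₗ h₀, hi₀, by rw [← LinearMap.comp_assoc, hpe', hh₀],
    LinearMap.ext fun x => ?_⟩
  exact e.symm_apply_apply x

end ProjCover

section Presentations

variable {A : Type} [Ring A] {P₀ P₁ Q₀ Q₁ X Y : Type} [AddCommGroup P₀] [Module A P₀]
  [AddCommGroup P₁] [Module A P₁] [AddCommGroup Q₀] [Module A Q₀] [AddCommGroup Q₁] [Module A Q₁]
  [AddCommGroup X] [Module A X] [AddCommGroup Y] [Module A Y]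

structure IsProjPres (σ : P₁ →ₗ[A] P₀) (π : P₀ →ₗ[A] X) : Prop where
  projective₁ : Module.Projective A P₁
  projective₀ : Module.Projective A P₀
  surjective : Function.Surjective π
  exact : range σ = ker π

structure IsMinPres (σ : P₁ →ₗ[A] P₀) (π : P₀ →ₗ[A] X) : Prop where
  exact : range σ = ker π
  cover₀ : IsProjCover A π
  cover₁ : IsProjCover A (σ.codRestrict (ker π) fun x => exact ▸ mem_range_self σ x)

theorem IsMinPres.isProjPres {σ : P₁ →ₗ[A] P₀} {π : P₀ →ₗ[A] X} (h : IsMinPres σ π) :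
    IsProjPres σ π :=
  ⟨h.cover₁.1, h.cover₀.1, h.cover₀.2.1, h.exact⟩

theorem IsProjPres.prodMap {σ : P₁ →ₗ[A] P₀} {π : P₀ →ₗ[A] X} {τ : Q₁ →ₗ[A] Q₀}
    {ρ : Q₀ →ₗ[A] Y} (hσ : IsProjPres σ π) (hτ : IsProjPres τ ρ) :
    IsProjPres (σ.prodMap τ) (π.prodMap ρ) := by
  have := hσ.projective₀; have := hσ.projective₁
  have := hτ.projective₀; have := hτ.projective₁
  exact ⟨inferInstance, inferInstance, hσ.surjective.prodMap hτ.surjective,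
    by rw [range_prodMap, ker_prodMap, hσ.exact, hτ.exact]⟩

theorem IsMinPres.exists_retract {σ : P₁ →ₗ[A] P₀} {π : P₀ →ₗ[A] X} {τ : Q₁ →ₗ[A] Q₀}
    {ρ : Q₀ →ₗ[A] Y} (hσ : IsMinPres σ π) (hτ : IsProjPres τ ρ) (i : X →ₗ[A] Y) (r : Y →ₗ[A] X)
    (hri : r ∘ₗ i = LinearMap.id) :
    ∃ (i₀ : P₀ →ₗ[A] Q₀) (r₀ : Q₀ →ₗ[A] P₀) (i₁ : P₁ →ₗ[A] Q₁) (r₁ : Q₁ →ₗ[A] P₁),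
      τ ∘ₗ i₁ = i₀ ∘ₗ σ ∧ σ ∘ₗ r₁ = r₀ ∘ₗ τ ∧
        r₀ ∘ₗ i₀ = LinearMap.id ∧ r₁ ∘ₗ i₁ = LinearMap.id := by
  have := hτ.projective₀; have := hτ.projective₁
  obtain ⟨i₀, r₀, hi₀, hr₀, h₀⟩ := hσ.cover₀.exists_retract hτ.surjective i r hri
  have hi : ∀ x ∈ ker π, i₀ x ∈ ker ρ := fun x hx => by
    rw [mem_ker, ← LinearMap.comp_apply, hi₀, LinearMap.comp_apply, mem_ker.1 hx, map_zero]
  have hr : ∀ y ∈ ker ρ, r₀ y ∈ ker π := fun y hy => by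
    rw [mem_ker, ← LinearMap.comp_apply, hr₀, LinearMap.comp_apply, mem_ker.1 hy, map_zero]
  have hτ' : Function.Surjective (τ.codRestrict (ker ρ) fun x => hτ.exact ▸ mem_range_self τ x) :=
    fun ⟨y, hy⟩ => by
      obtain ⟨x, rfl⟩ := hτ.exact ▸ hy
      exact ⟨x, rfl⟩
  obtain ⟨i₁, r₁, hi₁, hr₁, h₁⟩ := hσ.cover₁.exists_retract hτ' (i₀.restrict hi) (r₀.restrict hr)
    (LinearMap.ext fun x => Subtype.ext (LinearMap.congr_fun h₀ x))
  exact ⟨i₀, r₀, i₁, r₁, LinearMap.ext fun x => congr_arg Subtype.val (LinearMap.congr_fun hi₁ x),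
    LinearMap.ext fun y => congr_arg Subtype.val (LinearMap.congr_fun hr₁ y), h₀, h₁⟩

end Presentations

section Existence

variable {A : Type} [Ring A] [IsArtinianRing A] [IsNoetherianRing A]

theorem exists_isProjCover (X : Type) [AddCommGroup X] [Module A X] [Module.Finite A X] :
    ∃ (P : ModuleCat.{0} A) (p : P →ₗ[A] X), IsProjCover A p ∧ Module.Finite A P := by
  obtain ⟨n, π₀, hπ₀⟩ := Module.Finite.exists_fin' A X
  obtain ⟨P, ⟨hPproj, hPmap⟩, hPmin⟩ := IsArtinian.set_has_minimal
    {S : Submodule A (Fin n → A) | Module.Projective A S ∧ S.map π₀ = ⊤}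
    ⟨⊤, Module.Projective.of_equiv' Submodule.topEquiv.symm,
      by rw [Submodule.map_top, range_eq_top.2 hπ₀]⟩
  set p := π₀ ∘ₗ P.subtype
  have hp : Function.Surjective p := by
    rw [← range_eq_top, range_comp, Submodule.range_subtype, hPmap]
  refine ⟨.of A P, p, isProjCover_of_forall_surjective hp fun u hu => ?_, inferInstance⟩
  have hpu : ∀ m, p ∘ₗ u ^ m = p := fun m => by
    induction m with
    | zero => rfl
    | succ m ih => rw [pow_succ, Module.End.mul_eq_comp, ← LinearMap.comp_assoc, ih, hu]
  obtain ⟨k, hk, hkpos⟩ :=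
    (u.eventually_isCompl_ker_pow_range_pow.and (Filter.eventually_gt_atTop 0)).exists
  have hS : (range (u ^ k)).map P.subtype = P := by
    refine (Submodule.map_subtype_le P _).eq_of_not_lt (hPmin _ ⟨?_, ?_⟩)
    · have : Module.Projective A (range (u ^ k)) :=
        .of_split (range (u ^ k)).subtype ((range (u ^ k)).projectionOnto _ hk.symm)
          (Submodule.projectionOnto_comp_subtype _)
      exact .of_equiv' (Submodule.equivMapOfInjective _ P.injective_subtype _)
    · rw [← Submodule.map_comp, ← range_comp, hpu, range_eq_top.2 hp]
  have hk' : range (u ^ k) = ⊤ := Submodule.map_injective_of_injective P.injective_subtype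
    (by rw [Submodule.map_subtype_top, hS])
  rw [← range_eq_top, eq_top_iff, ← hk', ← Nat.sub_add_cancel hkpos, pow_succ',
    Module.End.mul_eq_comp]
  exact range_comp_le_range _ _

theorem exists_isMinPres (X : Type) [AddCommGroup X] [Module A X] [Module.Finite A X] :
    ∃ (P₀ P₁ : ModuleCat.{0} A) (σ : P₁ →ₗ[A] P₀) (π : P₀ →ₗ[A] X), IsMinPres σ π := by
  obtain ⟨P₀, π, hπ, _⟩ := exists_isProjCover (A := A) X
  obtain ⟨P₁, p₁, hp₁, _⟩ := exists_isProjCover (A := A) (ker π)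
  exact ⟨P₀, P₁, (ker π).subtype ∘ₗ p₁, π,
    ⟨by rw [range_comp, range_eq_top.2 hp₁.2.1, Submodule.map_subtype_top], hπ, hp₁⟩⟩

end Existence

section Horseshoe

variable {A : Type} [Ring A] {X Y Z P₀ P₁ Q₀ Q₁ : Type} [AddCommGroup X] [Module A X]
  [AddCommGroup Y] [Module A Y] [AddCommGroup Z] [Module A Z] [AddCommGroup P₀] [Module A P₀]
  [AddCommGroup P₁] [Module A P₁] [AddCommGroup Q₀] [Module A Q₀] [AddCommGroup Q₁] [Module A Q₁]
  {σ : P₁ →ₗ[A] P₀} {π : P₀ →ₗ[A] X} {τ : Q₁ →ₗ[A] Q₀} {ρ : Q₀ →ₗ[A] Z}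
  {i : X →ₗ[A] Y} {q : Y →ₗ[A] Z} {γ : Q₀ →ₗ[A] Y}

theorem horseshoe_surjective (hπ : Function.Surjective π) (hρ : Function.Surjective ρ)
    (hiq : range i = ker q) (hγ : q ∘ₗ γ = ρ) : Function.Surjective ((i ∘ₗ π).coprod γ) := by
  intro y
  obtain ⟨w, hw⟩ := hρ (q y)
  obtain ⟨x, hx⟩ : y - γ w ∈ range i := by
    rw [hiq, mem_ker, map_sub, ← LinearMap.comp_apply, hγ, hw, sub_self]
  obtain ⟨v, rfl⟩ := hπ x
  exact ⟨(v, w), by simp [hx]⟩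

theorem horseshoe_exact (hσ : range σ = ker π) (hτ : range τ = ker ρ) (hi : Function.Injective i)
    (hiq : range i = ker q) (hγ : q ∘ₗ γ = ρ) {δ : Q₁ →ₗ[A] P₀}
    (hδ : i ∘ₗ π ∘ₗ δ = γ ∘ₗ τ) :
    range ((σ ∘ₗ fst A P₁ Q₁ - δ ∘ₗ snd A P₁ Q₁).prod (τ ∘ₗ snd A P₁ Q₁)) =
      ker ((i ∘ₗ π).coprod γ) := by
  have hπσ : ∀ a, π (σ a) = 0 := fun a => mem_ker.1 (hσ ▸ mem_range_self σ a)
  have hqi : ∀ x, q (i x) = 0 := fun x => mem_ker.1 (hiq ▸ mem_range_self i x)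
  have hδ' : ∀ c, i (π (δ c)) = γ (τ c) := LinearMap.congr_fun hδ
  apply le_antisymm
  · rintro _ ⟨⟨a, c⟩, rfl⟩
    simp [hπσ, hδ']
  · rintro ⟨v, w⟩ hvw
    replace hvw : i (π v) + γ w = 0 := hvw
    have hρw : ρ w = q (i (π v) + γ w) := by
      rw [map_add, hqi, zero_add, ← LinearMap.comp_apply, hγ]
    obtain ⟨c, rfl⟩ : w ∈ range τ := by rw [hτ, mem_ker, hρw, hvw, map_zero]
    obtain ⟨a, ha⟩ : v + δ c ∈ range σ := by
      rw [hσ, mem_ker]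
      exact hi (by rw [map_zero, map_add, map_add, hδ', hvw])
    exact ⟨(a, c), by simp [ha]⟩

theorem exists_horseshoe (hX : IsProjPres σ π) (hZ : IsProjPres τ ρ) (hi : Function.Injective i)
    (hq : Function.Surjective q) (hiq : range i = ker q) :
    ∃ (δ : Q₁ →ₗ[A] P₀) (ε : P₀ × Q₀ →ₗ[A] Y),
      IsProjPres ((σ ∘ₗ fst A P₁ Q₁ - δ ∘ₗ snd A P₁ Q₁).prod (τ ∘ₗ snd A P₁ Q₁)) ε := by
  have := hX.projective₀; have := hX.projective₁
  have := hZ.projective₀; have := hZ.projective₁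
  obtain ⟨γ, hγ⟩ := Module.projective_lifting_property q ρ hq
  have hγτ : ∀ c, γ (τ c) ∈ range (i ∘ₗ π) := fun c => by
    rw [range_comp_of_range_eq_top _ (range_eq_top.2 hX.surjective), hiq, mem_ker,
      ← LinearMap.comp_apply q, hγ]
    exact mem_ker.1 (hZ.exact ▸ mem_range_self τ c)
  obtain ⟨δ, hδ⟩ := Module.projective_lifting_property (i ∘ₗ π).rangeRestrict
    ((γ ∘ₗ τ).codRestrict _ hγτ) (i ∘ₗ π).surjective_rangeRestrict
  refine ⟨δ, (i ∘ₗ π).coprod γ, inferInstance, inferInstance,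
    horseshoe_surjective hX.surjective hZ.surjective hiq hγ,
    horseshoe_exact hX.exact hZ.exact hi hiq hγ ?_⟩
  exact LinearMap.ext fun c => congr_arg Subtype.val (LinearMap.congr_fun hδ c)

end Horseshoe

section InvertedPresentations

variable {A B : Type} [Ring A] [Ring B] (f : A →+* B)

def HasInvertedPres (Y : Type) [AddCommGroup Y] [Module A Y] : Prop :=
  ∃ (Q₀ Q₁ : ModuleCat.{0} A) (τ : Q₁ →ₗ[A] Q₀) (ρ : Q₀ →ₗ[A] Y),
    IsProjPres τ ρ ∧ Function.Bijective (tensorMapOfHom f τ)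

variable {f} {X Y Z : Type} [AddCommGroup X] [Module A X] [AddCommGroup Y] [Module A Y]
  [AddCommGroup Z] [Module A Z]

theorem minPresInverted_of_retract {M : ModuleCat.{0} A} (hY : HasInvertedPres f Y)
    (i : M →ₗ[A] Y) (r : Y →ₗ[A] M) (hri : r ∘ₗ i = LinearMap.id) : MinPresInverted f M := by
  intro P₀ P₁ σ π hexact hπ hσ
  obtain ⟨Q₀, Q₁, τ, ρ, hτ, hτinv⟩ := hY
  obtain ⟨i₀, r₀, i₁, r₁, hi, hr, h₀, h₁⟩ := (IsMinPres.mk hexact hπ hσ).exists_retract hτ i r hri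
  exact bijective_tensorMapOfHom_of_retract f hi hr h₀ h₁ hτinv

theorem MinPresInverted.hasInvertedPres [IsArtinianRing A] [IsNoetherianRing A]
    {M : ModuleCat.{0} A} [Module.Finite A M] (hM : MinPresInverted f M) :
    HasInvertedPres f M := by
  obtain ⟨P₀, P₁, σ, π, hσ⟩ := exists_isMinPres (A := A) M
  exact ⟨P₀, P₁, σ, π, hσ.isProjPres, hM P₀ P₁ σ π hσ.exact hσ.cover₀ hσ.cover₁⟩

theorem HasInvertedPres.prod (hX : HasInvertedPres f X) (hY : HasInvertedPres f Y) :
    HasInvertedPres f (X × Y) := by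
  obtain ⟨P₀, P₁, σ, π, hσ, hσinv⟩ := hX
  obtain ⟨Q₀, Q₁, τ, ρ, hτ, hτinv⟩ := hY
  refine ⟨.of A (P₀ × Q₀), .of A (P₁ × Q₁), σ.prodMap τ, π.prodMap ρ, hσ.prodMap hτ,
    bijective_tensorMapOfHom_of_blockTriangular f _ ?_ ?_ ?_ hσinv hτinv⟩ <;>
  ext <;> simp

theorem HasInvertedPres.of_extension (hX : HasInvertedPres f X) (hZ : HasInvertedPres f Z)
    {i : X →ₗ[A] Y} {q : Y →ₗ[A] Z} (hi : Function.Injective i) (hq : Function.Surjective q)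
    (hiq : range i = ker q) : HasInvertedPres f Y := by
  obtain ⟨P₀, P₁, σ, π, hσ, hσinv⟩ := hX
  obtain ⟨Q₀, Q₁, τ, ρ, hτ, hτinv⟩ := hZ
  obtain ⟨δ, ε, hε⟩ := exists_horseshoe hσ hτ hi hq hiq
  refine ⟨.of A (P₀ × Q₀), .of A (P₁ × Q₁), _, ε, hε,
    bijective_tensorMapOfHom_of_blockTriangular f _ ?_ ?_ ?_ hσinv hτinv⟩ <;>
  ext <;> simp

end InvertedPresentations

theorem inverted_presentation_class_closure_general
    (K A B : Type) [Field K] [Ring A] [Algebra K A] [FiniteDimensional K A]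
    [Ring B]
    (f : A →+* B) :
    (∀ X Y : ModuleCat.{0} A, Module.Finite A X → Module.Finite A Y →
      MinPresInverted f X → MinPresInverted f Y →
      MinPresInverted f (ModuleCat.of A (↑X × ↑Y))) ∧
    (∀ X Y : ModuleCat.{0} A, Module.Finite A X → Module.Finite A Y →
      MinPresInverted f (ModuleCat.of A (↑X × ↑Y)) → MinPresInverted f X) ∧
    (∀ X Y Z : ModuleCat.{0} A, Module.Finite A X → Module.Finite A Y →
      Module.Finite A Z →
      ∀ (i : ↑X →ₗ[A] ↑Y) (q : ↑Y →ₗ[A] ↑Z), Function.Injective i →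
        Function.Surjective q → LinearMap.range i = LinearMap.ker q →
        MinPresInverted f X → MinPresInverted f Z → MinPresInverted f Y) := by
  have : IsArtinianRing A := isArtinian_of_tower K inferInstance
  have : IsNoetherianRing A := isNoetherian_of_tower K inferInstance
  refine ⟨fun X Y _ _ hX hY => ?_, fun X Y _ _ hXY => ?_,
    fun X Y Z _ _ _ i q hi hq hiq hX hZ => ?_⟩
  · exact minPresInverted_of_retract (hX.hasInvertedPres.prod hY.hasInvertedPres)
      LinearMap.id LinearMap.id rfl
  · exact minPresInverted_of_retract hXY.hasInvertedPres (inl A X Y) (fst A X Y) rfl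
  · exact minPresInverted_of_retract (hX.hasInvertedPres.of_extension hZ.hasInvertedPres hi hq hiq)
      LinearMap.id LinearMap.id rfl

/-- Let `f : A → B` be a ring epimorphism between finite dimensional
`K`-algebras, and let `C` be the class of finitely generated `A`-modules whose minimal
projective presentation becomes an isomorphism after applying `B ⊗_A -`.  Then `C` is
closed under finite direct sums, direct summands and extensions. -/
theorem inverted_presentation_class_closure
    (K A B : Type) [Field K] [Ring A] [Algebra K A] [FiniteDimensional K A]
    [Ring B] [Algebra K B] [FiniteDimensional K B]
    (f : A →+* B) (hepi : IsRingEpi f) :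
    (∀ X Y : ModuleCat.{0} A, Module.Finite A X → Module.Finite A Y →
      MinPresInverted f X → MinPresInverted f Y →
      MinPresInverted f (ModuleCat.of A (↑X × ↑Y))) ∧
    (∀ X Y : ModuleCat.{0} A, Module.Finite A X → Module.Finite A Y →
      MinPresInverted f (ModuleCat.of A (↑X × ↑Y)) → MinPresInverted f X) ∧
    (∀ X Y Z : ModuleCat.{0} A, Module.Finite A X → Module.Finite A Y →
      Module.Finite A Z →
      ∀ (i : ↑X →ₗ[A] ↑Y) (q : ↑Y →ₗ[A] ↑Z), Function.Injective i →
        Function.Surjective q → LinearMap.range i = LinearMap.ker q →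
        MinPresInverted f X → MinPresInverted f Z → MinPresInverted f Y) :=
  inverted_presentation_class_closure_general K A B f

end
end

section
/- Let A be a Nakayama algebra and let 0 → X₁ → Y → X₂ → 0 be a non-split short exact sequence with X₁ and X₂ indecomposable. Then Y has at most two indecomposable direct summands Y₁, Y₂, and the sequence is isomorphic to one where X₁ embeds into Y₁ and surjects onto Y₂, while Y₁ surjects onto X₂ and Y₂ embeds into X₂. -/
/-!
Over a Nakayama algebra every finitely generated indecomposable module `M` is uniserial. Images of
indecomposable projectives are uniserial and span `M`; let `U` be a uniserial submodule of maximal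
length. Projecting a finitely generated injective module containing `M` (coinduced from `K`) onto
a suitable indecomposable summand gives `g : M → Q` with `Q` uniserial and `g` injective on `U`.
The images under `g` of uniserial submodules are totally ordered, so by maximality they all lie in
`g U`. Hence `M = U ⊕ ker g`, and indecomposability forces `g` to be injective.

Thus `X₁` and `X₂` are uniserial. If `Y = U ⊕ V` with both summands nonzero, one of them, say `U`,
maps onto the uniserial `X₂`; then `X₁` maps onto `V` along `U`, so `V` is uniserial, and the same
argument applied to a splitting of `U` rules out a third summand. As `X₁` is uniserial it meets one
summand trivially, and since the sequence does not split that summand is `V`.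
-/

noncomputable section
open Function

/-- A module is uniserial if its submodules are totally ordered by inclusion. -/
def IsUniserial (A : Type) [Ring A] (M : Type) [AddCommGroup M] [Module A M] : Prop :=
  ∀ U V : Submodule A M, U ≤ V ∨ V ≤ U

/-- An indecomposable module: nonzero, and every direct sum decomposition is trivial. -/
def Indec (A : Type) [Ring A] (M : Type) [AddCommGroup M] [Module A M] : Prop :=
  Nontrivial M ∧ ∀ X Y : ModuleCat.{0} A, Nonempty (M ≃ₗ[A] (↑X × ↑Y)) →
    Subsingleton X ∨ Subsingleton Y

/-- A ring is a Nakayama algebra if every finitely generated indecomposable projective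
module and every finitely generated indecomposable injective module is uniserial. -/
def IsNakayamaAlgebra (A : Type) [Ring A] : Prop :=
  (∀ P : ModuleCat.{0} A, Module.Finite A P → Module.Projective A P → Indec A P →
    IsUniserial A P) ∧
  (∀ Q : ModuleCat.{0} A, Module.Finite A Q → Module.Injective A Q → Indec A Q →
    IsUniserial A Q)

open Submodule LinearMap

section Basic
variable {A : Type} [Ring A] {M N : Type} [AddCommGroup M] [Module A M] [AddCommGroup N]
  [Module A N]

theorem IsUniserial.le_total_of_le_range {P : Type} [AddCommGroup P] [Module A P]
    (hP : IsUniserial A P) (f : P →ₗ[A] M) {S T : Submodule A M} (hS : S ≤ range f)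
    (hT : T ≤ range f) : S ≤ T ∨ T ≤ S := by
  rw [← map_comap_eq_self hS, ← map_comap_eq_self hT]
  exact (hP _ _).imp (map_mono ·) (map_mono ·)

theorem IsUniserial.of_surjective (hM : IsUniserial A M) (f : M →ₗ[A] N) (hf : Surjective f) :
    IsUniserial A N := fun S T =>
  hM.le_total_of_le_range f (by simp [range_eq_top.2 hf]) (by simp [range_eq_top.2 hf])

theorem IsUniserial.of_injective (hN : IsUniserial A N) (f : M →ₗ[A] N) (hf : Injective f) :
    IsUniserial A M := fun S T =>
  (hN (S.map f) (T.map f)).imp (map_le_map_iff_of_injective hf _ _).1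
    (map_le_map_iff_of_injective hf _ _).1

theorem IsUniserial.le_total_of_le {C : Submodule A M} (hC : IsUniserial A C)
    {S T : Submodule A M} (hS : S ≤ C) (hT : T ≤ C) : S ≤ T ∨ T ≤ S :=
  hC.le_total_of_le_range C.subtype (by rwa [range_subtype]) (by rwa [range_subtype])

theorem IsUniserial.eq_bot_or_eq_bot_of_disjoint (hM : IsUniserial A M) {S T : Submodule A M}
    (h : Disjoint S T) : S = ⊥ ∨ T = ⊥ :=
  (hM S T).imp h.eq_bot_of_le h.symm.eq_bot_of_le

theorem IsUniserial.eq_top_or_eq_top_of_sup_eq_top (hM : IsUniserial A M) {S T : Submodule A M}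
    (h : S ⊔ T = ⊤) : S = ⊤ ∨ T = ⊤ :=
  (hM S T).symm.imp (fun hTS => by rwa [sup_eq_left.2 hTS] at h)
    (fun hST => by rwa [sup_eq_right.2 hST] at h)

theorem IsUniserial.map_eq_top_or_map_eq_top (hN : IsUniserial A N) {q : M →ₗ[A] N}
    (hq : Surjective q) {S T : Submodule A M} (h : S ⊔ T = ⊤) : S.map q = ⊤ ∨ T.map q = ⊤ :=
  hN.eq_top_or_eq_top_of_sup_eq_top (by
    rw [← Submodule.map_sup, h, Submodule.map_top, range_eq_top.2 hq])

theorem indec_iff_isCompl :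
    Indec A M ↔ Nontrivial M ∧ ∀ U V : Submodule A M, IsCompl U V → U = ⊥ ∨ V = ⊥ := by
  refine and_congr_right fun _ => ⟨fun h U V hUV => ?_, fun h X Y ⟨e⟩ => ?_⟩
  · simpa only [subsingleton_iff_eq_bot] using
      h (.of A U) (.of A V) ⟨(prodEquivOfIsCompl U V hUV).symm⟩
  · have hc : IsCompl ((range (inl A X Y)).comap e.toLinearMap)
        ((range (inr A X Y)).comap e.toLinearMap) :=
      (orderIsoMapComap e).symm.isCompl_iff.1 isCompl_range_inl_inr
    have key : ∀ {Z : Type} [AddCommGroup Z] [Module A Z] (j : Z →ₗ[A] X × Y), Injective j →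
        (range j).comap e.toLinearMap = ⊥ → Subsingleton Z := fun j hj hb => by
      rw [comap_equiv_eq_map_symm, Submodule.map_eq_bot_iff] at hb
      exact (LinearEquiv.ofInjective j hj).toEquiv.subsingleton_congr.2
        (subsingleton_iff_eq_bot.2 hb)
    exact (h _ _ hc).imp (key _ inl_injective) (key _ inr_injective)

theorem indec_or_subsingleton_or_exists_isCompl (M : Type) [AddCommGroup M] [Module A M] :
    (Indec A M ∨ Subsingleton M) ∨ ∃ U V : Submodule A M, IsCompl U V ∧ U ≠ ⊥ ∧ V ≠ ⊥ := by
  by_cases h : ∃ U V : Submodule A M, IsCompl U V ∧ U ≠ ⊥ ∧ V ≠ ⊥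
  · exact .inr h
  push Not at h
  rw [indec_iff_isCompl, ← not_nontrivial_iff_subsingleton]
  exact .inl ((em _).imp (fun hM => ⟨hM, fun U V hUV => or_iff_not_imp_left.2 (h U V hUV)⟩) id)

theorem Indec.of_linearEquiv (h : Indec A M) (e : M ≃ₗ[A] N) : Indec A N :=
  ⟨have := h.1; e.symm.toEquiv.nontrivial, fun X Y ⟨f⟩ => h.2 X Y ⟨e.trans f⟩⟩

theorem IsUniserial.indec [Nontrivial M] (hM : IsUniserial A M) : Indec A M :=
  indec_iff_isCompl.2 ⟨inferInstance, fun _ _ hUV => hM.eq_bot_or_eq_bot_of_disjoint hUV.disjoint⟩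

theorem IsUniserial.injective_projectionOnto_comp_or (hN : IsUniserial A N) (u : N →ₗ[A] M)
    (hu : Injective u) {U V : Submodule A M} (hUV : IsCompl U V) :
    Injective (U.projectionOnto V hUV ∘ₗ u) ∨ Injective (V.projectionOnto U hUV.symm ∘ₗ u) := by
  have hdisj : Disjoint (V.comap u) (U.comap u) := by
    rw [disjoint_iff, ← comap_inf, hUV.symm.inf_eq_bot, comap_bot, ker_eq_bot.2 hu]
  simp only [← ker_eq_bot, ker_comp, ker_projectionOnto]
  exact hN.eq_bot_or_eq_bot_of_disjoint hdisj

theorem isCompl_ker_of_range_le_map (g : M →ₗ[A] N) {U : Submodule A M}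
    (hU : Disjoint U (ker g)) (hg : range g ≤ U.map g) : IsCompl U (ker g) :=
  ⟨hU, codisjoint_iff.2 <| comap_map_eq g U ▸
    eq_top_iff.2 (map_le_iff_le_comap.1 (by rwa [Submodule.map_top]))⟩

theorem Module.Injective.of_split [Module.Injective A M] (i : N →ₗ[A] M) (s : M →ₗ[A] N)
    (H : s ∘ₗ i = LinearMap.id) : Module.Injective A N where
  out _ _ _ _ _ _ f hf g := by
    obtain ⟨h, hh⟩ := Module.Injective.out f hf (i ∘ₗ g)
    exact ⟨s ∘ₗ h, fun x => by simp [hh, ← LinearMap.comp_apply s i, H]⟩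

end Basic

section Length
variable {A M : Type} [Ring A] [AddCommGroup M] [Module A M] [IsArtinian A M] [IsNoetherian A M]

theorem Submodule.length_lt_length_of_lt {S T : Submodule A M} (h : S < T) :
    Module.length A S < Module.length A T := by
  simpa only [Module.length_submodule] using height_strictMono h

theorem Submodule.exists_mem_forall_length_le {S : Set (Submodule A M)} (hS : S.Nonempty) :
    ∃ U ∈ S, ∀ V ∈ S, Module.length A V ≤ Module.length A U := by
  have : Nonempty S := hS.to_subtype
  have hbdd : ⨆ V : S, Module.length A V.1 < ⊤ :=
    (iSup_le fun V => Module.length_le_of_injective _ V.1.injective_subtype).trans_lt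
      Module.length_ne_top.lt_top
  obtain ⟨⟨U, hU⟩, hmax⟩ := ENat.exists_eq_iSup_of_lt_top hbdd
  exact ⟨U, hU, fun V hV => hmax ▸ le_iSup (fun V : S => Module.length A V.1) ⟨V, hV⟩⟩

end Length

theorem induction_on_indec {A : Type} [Ring A] [IsArtinianRing A]
    {motive : ∀ (M : Type) [AddCommGroup M] [Module A M], Prop}
    (subsingleton : ∀ (M : Type) [AddCommGroup M] [Module A M], Subsingleton M → motive M)
    (indec : ∀ (M : Type) [AddCommGroup M] [Module A M], Module.Finite A M → Indec A M →
      motive M)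
    (isCompl : ∀ (M : Type) [AddCommGroup M] [Module A M] (U V : Submodule A M), IsCompl U V →
      motive U → motive V → motive M)
    (M : Type) [AddCommGroup M] [Module A M] [Module.Finite A M] : motive M := by
  induction hn : Module.length A M using WellFoundedLT.induction generalizing M with
  | ind n ih =>
  subst hn
  rcases indec_or_subsingleton_or_exists_isCompl (A := A) M with (h | h) | ⟨U, V, hUV, hU, hV⟩
  · exact indec M inferInstance h
  · exact subsingleton M h
  · refine isCompl M U V hUV (ih _ ?_ U rfl) (ih _ ?_ V rfl)
    · exact length_lt fun h => hV (eq_bot_of_top_isCompl (h ▸ hUV))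
    · exact length_lt fun h => hU (eq_bot_of_isCompl_top (h ▸ hUV))

open CategoryTheory ModuleCat in
/-- `M` embeds in the coinduced module `Hom_K(A, M)`, which is injective because coinduction is
right adjoint to restriction of scalars and every `K`-vector space is injective. -/
theorem exists_finite_injective_extension (K : Type) {A : Type} [Field K] [Ring A] [Algebra K A]
    [FiniteDimensional K A] (M : Type) [AddCommGroup M] [Module A M] [Module.Finite A M] :
    ∃ (E : ModuleCat.{0} A) (j : M →ₗ[A] E), Module.Finite A E ∧ Module.Injective A E ∧
      Injective j := by
  let f := algebraMap K A
  let X := (restrictScalars f).obj (ModuleCat.of A M)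
  let V := (restrictScalars f).obj (ModuleCat.of A A)
  refine ⟨(coextendScalars f).obj X, ((restrictCoextendScalarsAdj f).unit.app (.of A M)).hom,
    ?_, ?_, fun x y h => ?_⟩
  · have : IsScalarTower K A X := .of_algebraMap_smul fun _ _ => rfl
    have : IsScalarTower K A V := .of_algebraMap_smul fun _ _ => rfl
    have : Module.Finite A X := inferInstanceAs (Module.Finite A M)
    have : Module.Finite A V := inferInstanceAs (Module.Finite A A)
    have : Module.Finite K X := .trans A X
    have : Module.Finite K V := .trans A V
    have : IsScalarTower K A (V →ₗ[K] X) := .of_algebraMap_smul fun k g => by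
      ext s
      change g ((show A from s) * f k) = k • g s
      rw [← Algebra.commutes, ← map_smul]
      rfl
    have : Module.Finite A (V →ₗ[K] X) := .of_restrictScalars_finite K A _
    exact .equiv (CoextendScalars.equiv f X).symm
  · have : Module.Injective K X := Module.injective_of_isSemisimpleRing K X
    have := Module.injective_object_of_injective_module K X
    have := Injective.injective_of_adjoint (restrictCoextendScalarsAdj f) X
    exact Module.injective_module_of_injective_object A _
  · have h1 : (1 : A) • x = (1 : A) • y := congrArg (fun g => CoextendScalars.equiv f X g (1 : A)) h
    simpa using h1

section Nakayama
variable {A : Type} [Ring A] [IsArtinianRing A] (hNak : IsNakayamaAlgebra A)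
include hNak

theorem IsNakayamaAlgebra.sSup_isUniserial_eq_top (M : Type) [AddCommGroup M] [Module A M] :
    sSup {V : Submodule A M | IsUniserial A V} = ⊤ := by
  have key : ∀ (P : Type) [AddCommGroup P] [Module A P] [Module.Finite A P],
      Module.Projective A P → ∀ f : P →ₗ[A] M,
        range f ≤ sSup {V : Submodule A M | IsUniserial A V} := by
    refine induction_on_indec (fun P _ _ _ _ f => ?_) (fun P _ _ _ hP hproj f => ?_)
      (fun P _ _ U V hUV ihU ihV hproj f => ?_)
    · simp [range_eq_bot.2 (Subsingleton.elim f 0)]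
    · exact le_sSup <| show IsUniserial A (range f) from
        (hNak.1 (.of A P) ‹_› hproj hP).of_surjective f.rangeRestrict f.surjective_rangeRestrict
    · have hU := ihU (.of_split U.subtype _ (projectionOnto_comp_subtype hUV)) (f ∘ₗ U.subtype)
      have hV := ihV (.of_split V.subtype _ (projectionOnto_comp_subtype hUV.symm))
        (f ∘ₗ V.subtype)
      rw [range_comp, range_subtype] at hU hV
      rw [← Submodule.map_top, ← hUV.sup_eq_top, Submodule.map_sup]
      exact sup_le hU hV
  exact eq_top_iff.2 fun m _ => key A inferInstance (toSpanSingleton A M m) ⟨1, one_smul _ _⟩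

theorem IsNakayamaAlgebra.exists_uniserial_injective_comp (E : Type) [AddCommGroup E]
    [Module A E] [Module.Finite A E] (hE : Module.Injective A E) {W : Type} [AddCommGroup W]
    [Module A W] (hW : IsUniserial A W) (u : W →ₗ[A] E) (hu : Injective u) :
    ∃ (Q : ModuleCat.{0} A) (π : E →ₗ[A] Q), Module.Finite A Q ∧ IsUniserial A Q ∧
      Injective (π ∘ₗ u) := by
  revert E
  refine induction_on_indec (fun E _ _ _ _ u hu => ?_) (fun E _ _ _ hind hE u hu => ?_)
    (fun E _ _ U V hUV ihU ihV hE u hu => ?_)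
  · exact ⟨.of A E, LinearMap.id, inferInstance, fun S T => .inl (Subsingleton.elim S T).le, hu⟩
  · exact ⟨.of A E, LinearMap.id, ‹_›, hNak.2 (.of A E) ‹_› hE hind, hu⟩
  · rcases hW.injective_projectionOnto_comp_or u hu hUV with h | h
    · obtain ⟨Q, π, hQ, hQu, hπ⟩ :=
        ihU (hE.of_split U.subtype _ (projectionOnto_comp_subtype hUV)) _ h
      exact ⟨Q, π ∘ₗ U.projectionOnto V hUV, hQ, hQu, hπ⟩
    · obtain ⟨Q, π, hQ, hQu, hπ⟩ :=
        ihV (hE.of_split V.subtype _ (projectionOnto_comp_subtype hUV.symm)) _ h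
      exact ⟨Q, π ∘ₗ V.projectionOnto U hUV.symm, hQ, hQu, hπ⟩

end Nakayama

theorem IsNakayamaAlgebra.isUniserial_of_indec (K : Type) {A : Type} [Field K] [Ring A]
    [Algebra K A] [FiniteDimensional K A] (hNak : IsNakayamaAlgebra A) {M : Type}
    [AddCommGroup M] [Module A M] [Module.Finite A M] (hM : Indec A M) : IsUniserial A M := by
  have : IsArtinianRing A := .of_finite K A
  have : Nontrivial M := hM.1
  set S := {V : Submodule A M | IsUniserial A V}
  obtain ⟨U, hU, hUmax⟩ :=
    exists_mem_forall_length_le (S := S) ⟨⊥, fun _ _ => .inl (Subsingleton.elim _ _).le⟩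
  have hU0 : U ≠ ⊥ := by
    rintro rfl
    refine bot_ne_top (hNak.sSup_isUniserial_eq_top M ▸ sSup_eq_bot.2 fun V hV => ?_).symm
    have : Module.length A V = 0 := by simpa using hUmax V hV
    exact subsingleton_iff_eq_bot.1 (Module.length_eq_zero_iff.1 this)
  obtain ⟨E, j, _, hE, hj⟩ := exists_finite_injective_extension K (A := A) M
  obtain ⟨Q, π, _, hQ, hπ⟩ :=
    hNak.exists_uniserial_injective_comp E hE hU (j ∘ₗ U.subtype) (hj.comp U.injective_subtype)
  set g := π ∘ₗ j
  have hgU : Injective (g.domRestrict U) := hπ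
  have hle : ∀ V ∈ S, V.map g ≤ U.map g := by
    intro V hV
    refine (hQ _ _).elim id fun h => h.eq_or_lt.elim ge_of_eq fun hlt =>
      absurd ?_ (hUmax V hV).not_gt
    calc Module.length A U = Module.length A (U.map g) := by
          rw [← range_domRestrict]
          exact (LinearEquiv.ofInjective _ hgU).length_eq
      _ < Module.length A (V.map g) := length_lt_length_of_lt hlt
      _ ≤ Module.length A V := Module.length_le_of_surjective _ (g.submoduleMap_surjective V)
  have hrange : range g ≤ U.map g := by
    rw [← Submodule.map_top, ← hNak.sSup_isUniserial_eq_top M]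
    exact map_le_iff_le_comap.2 (sSup_le fun V hV => map_le_iff_le_comap.1 (hle V hV))
  have hcompl := isCompl_ker_of_range_le_map g (injective_domRestrict_iff.1 hgU) hrange
  exact hQ.of_injective g (ker_eq_bot.1 (((indec_iff_isCompl.1 hM).2 _ _ hcompl).resolve_left hU0))

section ShortExact
variable {A X₁ Y X₂ : Type} [Ring A] [AddCommGroup X₁] [Module A X₁] [AddCommGroup Y]
  [Module A Y] [AddCommGroup X₂] [Module A X₂] {i : X₁ →ₗ[A] Y} {q : Y →ₗ[A] X₂}

theorem surjective_projectionOnto_comp_of_map_eq_top (hexact : range i = ker q)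
    {U V : Submodule A Y} (hUV : IsCompl U V) (hU : U.map q = ⊤) :
    Surjective (V.projectionOnto U hUV.symm ∘ₗ i) := by
  have hsup : ker q ⊔ U = ⊤ := by rw [sup_comm, ← comap_map_eq, hU, comap_top]
  rw [← range_eq_top, range_comp, hexact, ← range_projectionOnto hUV.symm, ← Submodule.map_top,
    ← hsup, Submodule.map_sup, le_ker_iff_map.1 (ker_projectionOnto hUV.symm).ge, sup_bot_eq]

theorem injective_comp_subtype_of_injective_projectionOnto_comp (hexact : range i = ker q)
    {U V : Submodule A Y} (hUV : IsCompl U V) (h : Injective (U.projectionOnto V hUV ∘ₗ i)) :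
    Injective (q ∘ₗ V.subtype) := by
  rw [← ker_eq_bot, ker_comp, ← hexact, ← disjoint_iff_comap_eq_bot, disjoint_def]
  rintro _ hv ⟨x, rfl⟩
  rw [h.eq_iff' (map_zero _) |>.1 ((projectionOnto_apply_eq_zero_iff hUV).2 hv), map_zero]

theorem exists_section_of_injective_projectionOnto_comp (hexact : range i = ker q)
    {U V : Submodule A Y} (hUV : IsCompl U V) (h : Injective (V.projectionOnto U hUV.symm ∘ₗ i))
    (hU : U.map q = ⊤) : ∃ s : X₂ →ₗ[A] Y, q ∘ₗ s = LinearMap.id := by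
  have hq : Surjective (q ∘ₗ U.subtype) := by
    rw [← range_eq_top, range_comp, range_subtype, hU]
  let e := LinearEquiv.ofBijective _
    ⟨injective_comp_subtype_of_injective_projectionOnto_comp hexact hUV.symm h, hq⟩
  exact ⟨U.subtype ∘ₗ e.symm.toLinearMap, LinearMap.ext e.apply_symm_apply⟩

theorem isUniserial_of_isCompl_of_map_eq_top (hX₁ : IsUniserial A X₁)
    (hexact : range i = ker q) {U V : Submodule A Y} (hUV : IsCompl U V) (hU : U.map q = ⊤) :
    IsUniserial A V :=
  hX₁.of_surjective _ (surjective_projectionOnto_comp_of_map_eq_top hexact hUV hU)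

theorem indec_of_isCompl_of_map_eq_top (hX₁ : IsUniserial A X₁) (hX₂ : IsUniserial A X₂)
    (hexact : range i = ker q) {U V : Submodule A Y} (hUV : IsCompl U V) (hU : U ≠ ⊥)
    (hV : V ≠ ⊥) (hqU : U.map q = ⊤) : Indec A U ∧ Indec A V := by
  have : Nontrivial V := nontrivial_iff_ne_bot.2 hV
  refine ⟨indec_iff_isCompl.2 ⟨nontrivial_iff_ne_bot.2 hU, fun S T hST => ?_⟩,
    (isUniserial_of_isCompl_of_map_eq_top hX₁ hexact hUV hqU).indec⟩
  have hqU' : Surjective (q ∘ₗ U.subtype) := by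
    rw [← range_eq_top, range_comp, range_subtype, hqU]
  wlog hS : S.map (q ∘ₗ U.subtype) = ⊤ generalizing S T
  · exact (this T S hST.symm ((hX₂.map_eq_top_or_map_eq_top hqU' hST.sup_eq_top).resolve_left
      hS)).symm
  right
  have hsup : S.map U.subtype ⊔ T.map U.subtype = U := by
    rw [← Submodule.map_sup, hST.sup_eq_top, Submodule.map_top, range_subtype]
  -- `Y = S ⊕ (T ⊕ V)` with `S` onto `X₂`, so `T ⊕ V` is uniserial, which forces `T = 0`.
  have hC : IsCompl (S.map U.subtype) (T.map U.subtype ⊔ V) :=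
    (disjoint_map U.injective_subtype hST.disjoint).isCompl_sup_right_of_isCompl_sup_left
      (by rwa [hsup])
  have hCuni := isUniserial_of_isCompl_of_map_eq_top hX₁ hexact hC
    (by rwa [← Submodule.map_comp])
  have hTV : Disjoint (T.map U.subtype) V := hUV.disjoint.mono_left (map_subtype_le U T)
  rcases hCuni.le_total_of_le le_sup_left le_sup_right with h | h
  · exact map_injective_of_injective U.injective_subtype
      ((hTV.eq_bot_of_le h).trans (Submodule.map_bot _).symm)
  · exact absurd (hTV.symm.eq_bot_of_le h) hV

theorem exists_prod_equiv_of_isCompl (hexact : range i = ker q) {U V : Submodule A Y}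
    (hUV : IsCompl U V) (hU : Indec A U ∨ Subsingleton U) (hV : Indec A V ∨ Subsingleton V)
    (h : Injective (U.projectionOnto V hUV ∘ₗ i)) (hqU : U.map q = ⊤) :
    ∃ (Y₁ Y₂ : ModuleCat.{0} A) (e : Y ≃ₗ[A] (↑Y₁ × ↑Y₂)),
      (Indec A ↑Y₁ ∨ Subsingleton ↑Y₁) ∧ (Indec A ↑Y₂ ∨ Subsingleton ↑Y₂) ∧
      Injective ((LinearMap.fst A ↑Y₁ ↑Y₂).comp (e.toLinearMap.comp i)) ∧
      Surjective ((LinearMap.snd A ↑Y₁ ↑Y₂).comp (e.toLinearMap.comp i)) ∧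
      Surjective (q.comp (e.symm.toLinearMap.comp (LinearMap.inl A ↑Y₁ ↑Y₂))) ∧
      Injective (q.comp (e.symm.toLinearMap.comp (LinearMap.inr A ↑Y₁ ↑Y₂))) := by
  refine ⟨.of A U, .of A V, (prodEquivOfIsCompl U V hUV).symm, hU, hV, ?_, ?_, ?_, ?_⟩
  · simpa [← LinearMap.comp_assoc] using h
  · simpa [← LinearMap.comp_assoc] using
      surjective_projectionOnto_comp_of_map_eq_top hexact hUV hqU
  · rw [← range_eq_top]
    simpa [range_comp] using hqU
  · simpa using injective_comp_subtype_of_injective_projectionOnto_comp hexact hUV h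

end ShortExact

theorem nonsplit_ses_structure_over_nakayama_general
    (K A : Type) [Field K] [Ring A] [Algebra K A] [FiniteDimensional K A]
    (hNak : IsNakayamaAlgebra A)
    (X₁ Y X₂ : Type) [AddCommGroup X₁] [Module A X₁] [Module.Finite A X₁]
    [AddCommGroup Y] [Module A Y]
    [AddCommGroup X₂] [Module A X₂] [Module.Finite A X₂]
    (i : X₁ →ₗ[A] Y) (q : Y →ₗ[A] X₂)
    (hi : Injective i) (hq : Surjective q) (hexact : LinearMap.range i = LinearMap.ker q)
    (hnonsplit : ¬ ∃ s : X₂ →ₗ[A] Y, q.comp s = LinearMap.id)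
    (h1 : Indec A X₁) (h2 : Indec A X₂) :
    ∃ (Y₁ Y₂ : ModuleCat.{0} A) (e : Y ≃ₗ[A] (↑Y₁ × ↑Y₂)),
      (Indec A ↑Y₁ ∨ Subsingleton ↑Y₁) ∧ (Indec A ↑Y₂ ∨ Subsingleton ↑Y₂) ∧
      Injective ((LinearMap.fst A ↑Y₁ ↑Y₂).comp (e.toLinearMap.comp i)) ∧
      Surjective ((LinearMap.snd A ↑Y₁ ↑Y₂).comp (e.toLinearMap.comp i)) ∧
      Surjective (q.comp (e.symm.toLinearMap.comp (LinearMap.inl A ↑Y₁ ↑Y₂))) ∧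
      Injective (q.comp (e.symm.toLinearMap.comp (LinearMap.inr A ↑Y₁ ↑Y₂))) := by
  have hX₁ := hNak.isUniserial_of_indec K h1
  have hX₂ := hNak.isUniserial_of_indec K h2
  rcases indec_or_subsingleton_or_exists_isCompl (A := A) Y with hY | ⟨U, V, hUV, hU, hV⟩
  · refine exists_prod_equiv_of_isCompl hexact isCompl_top_bot
      (hY.imp (·.of_linearEquiv topEquiv.symm) fun h => topEquiv.toEquiv.subsingleton_congr.2 h)
      (.inr inferInstance) ?_ (by simp [range_eq_top.2 hq])
    rwa [← ker_eq_bot, ker_comp, ker_projectionOnto, comap_bot, ker_eq_bot]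
  wlog hqU : U.map q = ⊤ generalizing U V
  · exact this V U hUV.symm hV hU
      ((hX₂.map_eq_top_or_map_eq_top hq hUV.sup_eq_top).resolve_left hqU)
  obtain ⟨hUind, hVind⟩ := indec_of_isCompl_of_map_eq_top hX₁ hX₂ hexact hUV hU hV hqU
  refine exists_prod_equiv_of_isCompl hexact hUV (.inl hUind) (.inl hVind) ?_ hqU
  exact (hX₁.injective_projectionOnto_comp_or i hi hUV).resolve_right fun h =>
    hnonsplit (exists_section_of_injective_projectionOnto_comp hexact hUV h hqU)

/-- Let `A` be a Nakayama algebra and `0 → X₁ → Y → X₂ → 0` a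
non-split short exact sequence with `X₁`, `X₂` indecomposable.  Then `Y` has at most two
indecomposable direct summands `Y₁, Y₂`, and the sequence is isomorphic to one in which
`X₁` embeds into `Y₁` and surjects onto `Y₂`, while `Y₁` surjects onto `X₂` and `Y₂`
embeds into `X₂`. -/
theorem nonsplit_ses_structure_over_nakayama
    (K A : Type) [Field K] [Ring A] [Algebra K A] [FiniteDimensional K A]
    (hNak : IsNakayamaAlgebra A)
    (X₁ Y X₂ : Type) [AddCommGroup X₁] [Module A X₁] [Module.Finite A X₁]
    [AddCommGroup Y] [Module A Y] [Module.Finite A Y]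
    [AddCommGroup X₂] [Module A X₂] [Module.Finite A X₂]
    (i : X₁ →ₗ[A] Y) (q : Y →ₗ[A] X₂)
    (hi : Injective i) (hq : Surjective q) (hexact : LinearMap.range i = LinearMap.ker q)
    (hnonsplit : ¬ ∃ s : X₂ →ₗ[A] Y, q.comp s = LinearMap.id)
    (h1 : Indec A X₁) (h2 : Indec A X₂) :
    ∃ (Y₁ Y₂ : ModuleCat.{0} A) (e : Y ≃ₗ[A] (↑Y₁ × ↑Y₂)),
      (Indec A ↑Y₁ ∨ Subsingleton ↑Y₁) ∧ (Indec A ↑Y₂ ∨ Subsingleton ↑Y₂) ∧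
      Injective ((LinearMap.fst A ↑Y₁ ↑Y₂).comp (e.toLinearMap.comp i)) ∧
      Surjective ((LinearMap.snd A ↑Y₁ ↑Y₂).comp (e.toLinearMap.comp i)) ∧
      Surjective (q.comp (e.symm.toLinearMap.comp (LinearMap.inl A ↑Y₁ ↑Y₂))) ∧
      Injective (q.comp (e.symm.toLinearMap.comp (LinearMap.inr A ↑Y₁ ↑Y₂))) :=
  nonsplit_ses_structure_over_nakayama_general K A hNak X₁ Y X₂ i q hi hq hexact hnonsplit h1 h2
end
end
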